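/- Let X and Y be stiff complete simplicial sets and f : Y → X a simplicial map. The following are equivalent: (1) f is conservative; (2) f preserves the word splitting, i.e. f maps Y_w into X_w for every n and every word w ∈ {0,a}^n; (3) f_1 maps Y_a into X_a. -/

import Mathlib

open CategoryTheory CategoryTheory.Limits Simplicial Opposite

/-- A map in the simplex category is *generic* if it preserves the endpoints. -/
def IsGeneric {a b : SimplexCategory} (g : a ⟶ b) : Prop :=
  g.toOrderHom 0 = 0 ∧ g.toOrderHom (Fin.last a.len) = Fin.last b.len

/-- A map in the simplex category is *free* if it is distance preserving. -/
def IsFree {a b : SimplexCategory} (f : a ⟶ b) : Prop :=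
  ∀ i : Fin (a.len + 1), (f.toOrderHom i : ℕ) = (f.toOrderHom 0 : ℕ) + (i : ℕ)

/-- A decomposition space is a simplicial set carrying every pushout in `Δ` of a
generic map `g` along a free map `f` to a pullback of sets. -/
def IsDecomposition (X : SSet) : Prop :=
  ∀ ⦃a b c d : SimplexCategory⦄ (g : a ⟶ b) (f : a ⟶ c) (h : b ⟶ d) (k : c ⟶ d),
    IsGeneric g → IsFree f → IsPushout g f h k →
    IsPullback (X.map h.op) (X.map k.op) (X.map g.op) (X.map f.op)

/-- A simplicial set is *complete* if all degeneracy maps are injective. -/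
def Complete (X : SSet) : Prop :=
  ∀ (n : ℕ) (i : Fin (n + 1)), Function.Injective (X.σ i : X _⦋n⦌ ⟶ X _⦋n + 1⦌)

/-- The free map `[1] → [n]` sending `0, 1` to `i, i+1`; it induces the map
taking the `i`-th principal edge (`0`-indexed) of an `n`-simplex. -/
def principalEdge (n : ℕ) (i : Fin n) : (⦋1⦌ : SimplexCategory) ⟶ ⦋n⦌ :=
  SimplexCategory.mkHom
    { toFun := fun j => ⟨i.1 + j.1, by have := i.2; have := j.2; omega⟩
      monotone' := fun a b h => by
        simp only [Fin.mk_le_mk]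
        exact Nat.add_le_add_left h i.1 }

/-- The unique generic map `[1] → [n]` (`0 ↦ 0`, `1 ↦ n`); it induces the map
taking the long edge of an `n`-simplex. -/
def longEdgeMap (n : ℕ) : (⦋1⦌ : SimplexCategory) ⟶ ⦋n⦌ :=
  SimplexCategory.mkHom
    { toFun := fun j => ⟨j.1 * n, by
        have h := j.2
        have : j.1 * n ≤ 1 * n := Nat.mul_le_mul_right n (by omega)
        omega⟩
      monotone' := fun a b h => by
        simp only [Fin.mk_le_mk]
        exact Nat.mul_le_mul_right n h }

/-- The alphabet `{0, 1, a}`: `z` prescribes a degenerate principal edge, `o` an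
unrestricted one, `a` a nondegenerate one. -/
inductive Letter where
  | z
  | o
  | a
  deriving DecidableEq

/-- The subset of `X₁` prescribed by a letter. -/
def edgeSet (X : SSet) : Letter → Set (X _⦋1⦌) := fun l => match l with
  | .z => Set.range (X.σ (0 : Fin 1))
  | .o => Set.univ
  | .a => (Set.range (X.σ (0 : Fin 1)))ᶜ

/-- `X_w`, the set of `n`-simplices whose principal edges have the types
prescribed by the word `w`. -/
def wordSet (X : SSet) {n : ℕ} (w : Fin n → Letter) : Set (X _⦋n⦌) :=
  {σ | ∀ i : Fin n, X.map (principalEdge n i).op σ ∈ edgeSet X (w i)}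

/-- A simplex is *effective* if all its principal edges are nondegenerate. -/
def Effective (X : SSet) {n : ℕ} (σ : X _⦋n⦌) : Prop :=
  ∀ i : Fin n, X.map (principalEdge n i).op σ ∉ Set.range (X.σ (0 : Fin 1))

/-- The constant word `aa⋯a`. -/
def allA (n : ℕ) : Fin n → Letter := fun _ => Letter.a

/-- Concatenation of words. -/
def concatW {m n : ℕ} (v : Fin m → Letter) (v' : Fin n → Letter) : Fin (m + n) → Letter :=
  fun i => if h : i.1 < m then v ⟨i.1, h⟩ else v' ⟨i.1 - m, by have := i.2; omega⟩

/-- The word `v ℓ v'` obtained by splicing a letter `ℓ` between the words `v` and `v'`. -/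
def splice {m n : ℕ} (v : Fin m → Letter) (l : Letter) (v' : Fin n → Letter) :
    Fin (m + n + 1) → Letter :=
  fun i => if h : i.1 < m then v ⟨i.1, h⟩
    else if h2 : i.1 = m then l
    else v' ⟨i.1 - (m + 1), by have := i.2; omega⟩

/-- A simplex (of positive dimension) is degenerate if it is in the image of some
degeneracy map. -/
def Degen (X : SSet) {n : ℕ} (σ : X _⦋n + 1⦌) : Prop :=
  ∃ i : Fin (n + 1), σ ∈ Set.range (X.σ i)

/-- A simplicial map is *cULF* if its naturality squares on all generic maps are
pullbacks. -/
def IsCULF {Y X : SSet} (f : Y ⟶ X) : Prop :=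
  ∀ ⦃a b : SimplexCategory⦄ (g : a ⟶ b), IsGeneric g →
    IsPullback (f.app (op b)) (Y.map g.op) (X.map g.op) (f.app (op a))

/-- A simplicial map is *conservative* if its naturality squares on all degeneracy
maps are pullbacks. -/
def Conservative {Y X : SSet} (f : Y ⟶ X) : Prop :=
  ∀ (n : ℕ) (i : Fin (n + 1)),
    IsPullback (f.app (op (SimplexCategory.mk n))) (Y.σ i) (X.σ i)
      (f.app (op (SimplexCategory.mk (n + 1))))

/-- A simplicial set is *stiff* if it carries every pushout in `Δ` of a codegeneracy
map along a free map to a pullback of sets. -/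
def Stiff (X : SSet) : Prop :=
  ∀ (k : ℕ) (i : Fin (k + 1)) ⦃c d : SimplexCategory⦄
    (f : SimplexCategory.mk (k + 1) ⟶ c) (h : SimplexCategory.mk k ⟶ d) (j : c ⟶ d),
    IsFree f → IsPushout (SimplexCategory.σ i) f h j →
    IsPullback (X.map h.op) (X.map j.op) (X.map (SimplexCategory.σ i).op) (X.map f.op)

/-- The map `[0] → [n]` picking out the vertex `i`. -/
def vertexMap (n : ℕ) (i : Fin (n + 1)) : (⦋0⦌ : SimplexCategory) ⟶ ⦋n⦌ :=
  SimplexCategory.mkHom ⟨fun _ => i, fun _ _ _ => le_refl _⟩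

/-- The unique map `[n] → [0]`; it induces the iterated degeneracy `X₀ → Xₙ`. -/
def toZero (n : ℕ) : (⦋n⦌ : SimplexCategory) ⟶ ⦋0⦌ :=
  SimplexCategory.mkHom ⟨fun _ => 0, fun _ _ _ => le_refl _⟩

/-- The generic map `[2] → [m+n]` sending `0,1,2` to `0,m,m+n`. -/
def midMap (m n : ℕ) : (⦋2⦌ : SimplexCategory) ⟶ ⦋m + n⦌ :=
  SimplexCategory.mkHom
    { toFun := fun j => ⟨if j.1 = 0 then 0 else if j.1 = 1 then m else m + n, by
        split
        · omega
        · split <;> omega⟩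
      monotone' := by
        intro a b hab
        have h : a.1 ≤ b.1 := hab
        have ha := a.2
        have hb := b.2
        simp only [Fin.mk_le_mk]
        split <;> split <;> (try split) <;> (try split) <;> omega }

/-- The free map `[m] → [m+n]` onto the initial segment. -/
def freeInitial (m n : ℕ) : (⦋m⦌ : SimplexCategory) ⟶ ⦋m + n⦌ :=
  SimplexCategory.mkHom ⟨fun i => ⟨i.1, by have := i.2; omega⟩, fun a b h => h⟩

/-- The free map `[n] → [m+n]` onto the final segment. -/
def freeFinal (m n : ℕ) : (⦋n⦌ : SimplexCategory) ⟶ ⦋m + n⦌ :=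
  SimplexCategory.mkHom ⟨fun i => ⟨m + i.1, by have := i.2; omega⟩,
    fun a b h => by
      simp only [Fin.mk_le_mk]
      exact Nat.add_le_add_left h m⟩

/-- The word `1aa⋯a` (`n` letters `a`). -/
def oneA (n : ℕ) : Fin (n + 1) → Letter := fun i => if i.1 = 0 then Letter.o else Letter.a

/-- The word `0aa⋯a` (`n` letters `a`). -/
def zeroA (n : ℕ) : Fin (n + 1) → Letter := fun i => if i.1 = 0 then Letter.z else Letter.a

/-- The word `aa⋯a1` (`n` letters `a`). -/
def aOne (n : ℕ) : Fin (n + 1) → Letter := fun i => if i.1 = n then Letter.o else Letter.a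

/-- The word `aa⋯a0` (`n` letters `a`). -/
def aZero (n : ℕ) : Fin (n + 1) → Letter := fun i => if i.1 = n then Letter.z else Letter.a

/-- The number of letters `0` in a word. -/
def zcount {n : ℕ} (w : Fin n → Letter) : ℕ :=
  (Finset.univ.filter fun i => w i = Letter.z).card

/-- The surjection `[n] → [n - zcount w]` collapsing, for each position `j` with
`w j = 0`, the vertex `j+1` onto the vertex `j`; the induced map
`X_{n - zcount w} → X_n` is the iterated degeneracy `s_{j_k} ⋯ s_{j_1}` where
`j_1 < ⋯ < j_k` are the positions of the letters `0` of `w`. -/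
def collapseMap {n : ℕ} (w : Fin n → Letter) :
    (⦋n⦌ : SimplexCategory) ⟶ ⦋n - zcount w⦌ :=
  SimplexCategory.mkHom
    { toFun := fun t =>
        ⟨(Finset.univ.filter fun i : Fin n => i.1 < t.1 ∧ ¬ (w i = Letter.z)).card, by
          have h2 := Finset.card_filter_add_card_filter_not
            (s := (Finset.univ : Finset (Fin n))) (p := fun i => w i = Letter.z)
          have h1 : (Finset.univ.filter fun i : Fin n => i.1 < t.1 ∧ ¬ (w i = Letter.z)).card
              ≤ (Finset.univ.filter fun i : Fin n => ¬ (w i = Letter.z)).card :=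
            Finset.card_le_card (fun x hx => by
              simp only [Finset.mem_filter] at hx ⊢
              exact ⟨hx.1, hx.2.2⟩)
          have h3 : zcount w = (Finset.univ.filter fun i : Fin n => w i = Letter.z).card := rfl
          simp only [Finset.card_univ, Fintype.card_fin] at h2
          omega⟩
      monotone' := by
        intro a b hab
        have h : a.1 ≤ b.1 := hab
        simp only [Fin.mk_le_mk]
        exact Finset.card_le_card (fun x hx => by
          simp only [Finset.mem_filter] at hx ⊢
          exact ⟨hx.1, lt_of_lt_of_le hx.2.1 h, hx.2.2⟩) }

/-- An edge has finite length if there is a bound on the dimensions of the effective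
simplices having it as long edge. -/
def FiniteLength (X : SSet) (a : X _⦋1⦌) : Prop :=
  ∃ N : ℕ, ∀ (n : ℕ) (σ : X _⦋n⦌), Effective X σ →
    X.map (longEdgeMap n).op σ = a → n ≤ N

/-- A *tight* decomposition space: a complete decomposition space in which every edge
has finite length. -/
def Tight (X : SSet) : Prop :=
  IsDecomposition X ∧ Function.Injective (X.σ (0 : Fin 1) : X _⦋0⦌ ⟶ X _⦋1⦌) ∧
    ∀ a : X _⦋1⦌, FiniteLength X a

/-- The length of an edge: the supremum of the dimensions of effective simplices
having it as long edge. -/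
noncomputable def edgeLength (X : SSet) (a : X _⦋1⦌) : ℕ :=
  sSup (Set.ofPred fun n : ℕ => ∃ σ : X _⦋n⦌, Effective X σ ∧ X.map (longEdgeMap n).op σ = a)

/-- A complete simplicial set is *split* if all face maps preserve nondegenerate
simplices. -/
def Split (X : SSet) : Prop :=
  Complete X ∧ ∀ (n : ℕ) (i : Fin (n + 3)) (σ : X _⦋n + 2⦌),
    ¬ Degen X σ → ¬ Degen X (X.δ i σ)

/-- The counit: the indicator function of the degenerate edges. -/
noncomputable def epsFun (X : SSet) : X _⦋1⦌ → ℚ := fun f =>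
  haveI := Classical.propDecidable (f ∈ Set.range (X.σ (0 : Fin 1)))
  if f ∈ Set.range (X.σ (0 : Fin 1)) then 1 else 0

/-- Convolution product on `ℚ`-valued functions on `X₁`. -/
noncomputable def convFun (X : SSet) (φ ψ : X _⦋1⦌ → ℚ) : X _⦋1⦌ → ℚ :=
  fun f => ∑ᶠ σ ∈ (fun τ => X.δ (1 : Fin 3) τ) ⁻¹' {f},
    φ (X.δ (2 : Fin 3) σ) * ψ (X.δ (0 : Fin 3) σ)

/-- The Möbius function `Φ_even - Φ_odd`. -/
noncomputable def muFun (X : SSet) : X _⦋1⦌ → ℚ :=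
  fun f => ∑ᶠ n : ℕ, (-1 : ℚ) ^ n *
    (Nat.card {σ : X.obj (op (SimplexCategory.mk n)) // Effective X σ ∧ X.map (longEdgeMap n).op σ = f} : ℚ)

/-- The category `Δ_inj`: objects those of the simplex category, morphisms the
injective monotone maps. -/
structure DeltaInj : Type where
  /-- the underlying object of the simplex category -/
  obj : SimplexCategory

instance : Category DeltaInj where
  Hom a b := {f : a.obj ⟶ b.obj // Function.Injective f.toOrderHom}
  id a := ⟨𝟙 a.obj, by
    rw [SimplexCategory.id_toOrderHom]
    exact fun x y h => h⟩
  comp f g := ⟨f.1 ≫ g.1, by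
    rw [SimplexCategory.comp_toOrderHom]
    exact fun x y h => f.2 (g.2 h)⟩
  id_comp f := by apply Subtype.ext; simp
  comp_id f := by apply Subtype.ext; simp
  assoc f g h := by apply Subtype.ext; simp

/-- The inclusion functor `Δ_inj ⊆ Δ`. -/
def DeltaInj.incl : DeltaInj ⥤ SimplexCategory where
  obj a := a.obj
  map f := f.1

/-- A *semi-decomposition space*: a semi-simplicial set carrying every pushout in
`Δ_inj` of a generic (inner) face map along a free (outer) face map to a pullback. -/
def IsSemiDecomposition (Z : DeltaInjᵒᵖ ⥤ Type) : Prop :=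
  ∀ ⦃a b c d : DeltaInj⦄ (g : a ⟶ b) (f : a ⟶ c) (h : b ⟶ d) (k : c ⟶ d),
    IsGeneric g.1 → IsFree f.1 → IsPushout g f h k →
    IsPullback (Z.map h.op) (Z.map k.op) (Z.map g.op) (Z.map f.op)

/-- A map of semi-simplicial sets is *ULF* if its naturality squares on all generic
face maps are pullbacks. -/
def IsULF {Z W : DeltaInjᵒᵖ ⥤ Type} (φ : Z ⟶ W) : Prop :=
  ∀ ⦃a b : DeltaInj⦄ (g : a ⟶ b), IsGeneric g.1 →
    IsPullback (φ.app (op b)) (Z.map g.op) (W.map g.op) (φ.app (op a))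

lemma conservative_id (X : SSet) : Conservative (𝟙 X) := by
  intro n i
  exact IsPullback.of_horiz_isIso ⟨by simp⟩

lemma conservative_comp {X Y Z : SSet} {f : X ⟶ Y} {g : Y ⟶ Z}
    (hf : Conservative f) (hg : Conservative g) : Conservative (f ≫ g) := by
  intro n i
  simpa using IsPullback.paste_horiz (hf n i) (hg n i)

lemma isCULF_id (X : SSet) : IsCULF (𝟙 X) := by
  intro a b gm hgm
  exact IsPullback.of_horiz_isIso ⟨by simp⟩

lemma isCULF_comp {X Y Z : SSet} {f : X ⟶ Y} {g : Y ⟶ Z}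
    (hf : IsCULF f) (hg : IsCULF g) : IsCULF (f ≫ g) := by
  intro a b gm hgm
  simpa using IsPullback.paste_horiz (hf gm hgm) (hg gm hgm)

lemma isULF_id (Z : DeltaInjᵒᵖ ⥤ Type) : IsULF (𝟙 Z) := by
  intro a b gm hgm
  exact IsPullback.of_horiz_isIso ⟨by simp⟩

lemma isULF_comp {X Y Z : DeltaInjᵒᵖ ⥤ Type} {f : X ⟶ Y} {g : Y ⟶ Z}
    (hf : IsULF f) (hg : IsULF g) : IsULF (f ≫ g) := by
  intro a b gm hgm
  simpa using IsPullback.paste_horiz (hf gm hgm) (hg gm hgm)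

/-- The category of split simplicial sets and conservative maps. -/
structure SplitSSet : Type 1 where
  /-- the underlying simplicial set -/
  X : SSet.{0}
  split : Split X

instance : Category SplitSSet where
  Hom A B := {f : A.X ⟶ B.X // Conservative f}
  id A := ⟨𝟙 A.X, conservative_id A.X⟩
  comp f g := ⟨f.1 ≫ g.1, conservative_comp f.2 g.2⟩
  id_comp f := by apply Subtype.ext; simp
  comp_id f := by apply Subtype.ext; simp
  assoc f g h := by apply Subtype.ext; simp

/-- The forgetful functor from split simplicial sets to simplicial sets. -/
def SplitSSet.forget : SplitSSet ⥤ SSet where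
  obj A := A.X
  map f := f.1

/-- The category of split decomposition spaces and cULF maps. -/
structure SplitDecomp : Type 1 where
  /-- the underlying simplicial set -/
  X : SSet.{0}
  split : Split X
  decomp : IsDecomposition X

instance : Category SplitDecomp where
  Hom A B := {f : A.X ⟶ B.X // IsCULF f}
  id A := ⟨𝟙 A.X, isCULF_id A.X⟩
  comp f g := ⟨f.1 ≫ g.1, isCULF_comp f.2 g.2⟩
  id_comp f := by apply Subtype.ext; simp
  comp_id f := by apply Subtype.ext; simp
  assoc f g h := by apply Subtype.ext; simp

/-- The forgetful functor from split decomposition spaces to simplicial sets. -/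
def SplitDecomp.forget : SplitDecomp ⥤ SSet where
  obj A := A.X
  map f := f.1

/-- The category of semi-decomposition spaces and ULF maps. -/
structure SemiDecomp : Type 1 where
  /-- the underlying semi-simplicial set -/
  Z : DeltaInjᵒᵖ ⥤ Type
  semidecomp : IsSemiDecomposition Z

instance : Category SemiDecomp where
  Hom A B := {φ : A.Z ⟶ B.Z // IsULF φ}
  id A := ⟨𝟙 A.Z, isULF_id A.Z⟩
  comp f g := ⟨f.1 ≫ g.1, isULF_comp f.2 g.2⟩
  id_comp f := by apply Subtype.ext; simp
  comp_id f := by apply Subtype.ext; simp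
  assoc f g h := by apply Subtype.ext; simp

/-- The forgetful functor from semi-decomposition spaces to semi-simplicial sets. -/
def SemiDecomp.forget : SemiDecomp ⥤ (DeltaInjᵒᵖ ⥤ Type) where
  obj A := A.Z
  map f := f.1

/-! The heart of the matter is that in a stiff simplicial set an `(n+1)`-simplex lies in the
image of `s_i` exactly when its `i`-th principal edge is degenerate: the codegeneracy
`[1] → [0]` pushed out along the `i`-th principal edge `[1] → [n+1]` is `s^i : [n+1] → [n]`.
Hence if `f` reflects degeneracy of edges and `f y = s_i x`, then `y = s_i y₀`, completeness
of `X` forces `f y₀ = x`, and completeness of `Y` makes `y₀` unique: the naturality square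
of `s_i` is a pullback. The other implications only use naturality of `f`. -/

namespace SimplexCategory

lemma isFree_principalEdge (n : ℕ) (i : Fin n) : IsFree (principalEdge n i) := fun j => by
  change i.1 + j.1 = i.1 + 0 + j.1
  omega

lemma principalEdge_one (i : Fin 1) : principalEdge 1 i = 𝟙 ⦋1⦌ := by
  obtain rfl := Subsingleton.elim i 0
  ext j : 3
  fin_cases j <;> rfl

lemma vertexMap_eq_const (n : ℕ) (i : Fin (n + 1)) : vertexMap n i = const ⦋0⦌ ⦋n⦌ i := rfl

lemma σ_zero_comp_vertexMap (n : ℕ) (i : Fin (n + 1)) :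
    σ (0 : Fin 1) ≫ vertexMap n i = principalEdge (n + 1) i ≫ σ i := by
  ext j : 3
  fin_cases j
  · change i = i.predAbove i.castSucc
    simp
  · change i = i.predAbove i.succ
    simp

lemma vertexMap_comp_δ_castSucc (n : ℕ) (i : Fin (n + 1)) :
    vertexMap n i ≫ δ i.castSucc = δ (0 : Fin 2) ≫ principalEdge (n + 1) i := by
  rw [vertexMap_eq_const, const_comp, eq_const_of_zero (δ 0 ≫ _)]
  exact congr_arg _ (Fin.succAbove_castSucc_self i)

/-- Any cocone identifies the vertices `i` and `i + 1`, so it factors through `σ i`, which is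
split by `δ i`. -/
lemma isPushout_σ_principalEdge (n : ℕ) (i : Fin (n + 1)) :
    IsPushout (σ (0 : Fin 1)) (principalEdge (n + 1) i) (vertexMap n i) (σ i) := by
  refine IsPushout.of_isColimit' ⟨σ_zero_comp_vertexMap n i⟩
    (PushoutCocone.IsColimit.mk _ (fun s => δ i.castSucc ≫ s.inr) (fun s => ?_) (fun s => ?_)
      (fun s m _ hm => ?_))
  · rw [reassoc_of% vertexMap_comp_δ_castSucc, ← s.condition]
    exact δ_comp_σ_self_assoc (i := 0) _
  · have h0 := congr_arg (fun φ => φ.toOrderHom 0) s.condition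
    have h1 := congr_arg (fun φ => φ.toOrderHom 1) s.condition
    obtain ⟨θ, hθ⟩ := eq_σ_comp_of_not_injective' s.inr i (h0.symm.trans h1)
    rw [hθ, δ_comp_σ_self_assoc]
  · rw [← hm, δ_comp_σ_self_assoc]

end SimplexCategory

universe u

variable {X Y : SSet.{u}}

def PreservesNondegenerateEdges (f : Y ⟶ X) : Prop :=
  ∀ e : Y _⦋1⦌, e ∉ Set.range (Y.σ 0) → f.app (op ⦋1⦌) e ∉ Set.range (X.σ 0)

def PreservesWordSplitting (f : Y ⟶ X) : Prop :=
  ∀ (n : ℕ) (w : Fin n → Letter), (∀ i, w i ≠ Letter.o) →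
    ∀ y ∈ wordSet Y w, f.app (op ⦋n⦌) y ∈ wordSet X w

lemma map_principalEdge_σ {n : ℕ} (i : Fin (n + 1)) (x : X _⦋n⦌) :
    X.map (principalEdge (n + 1) i).op (X.σ i x) = X.σ 0 (X.map (vertexMap n i).op x) := by
  change X.map _ (X.map _ x) = X.map _ (X.map _ x)
  rw [← Functor.map_comp_apply, ← Functor.map_comp_apply, ← op_comp, ← op_comp,
    SimplexCategory.σ_zero_comp_vertexMap]

lemma Stiff.mem_range_σ_iff (hX : Stiff X) {n : ℕ} (i : Fin (n + 1)) (x : X _⦋n + 1⦌) :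
    x ∈ Set.range (X.σ i) ↔ X.map (principalEdge (n + 1) i).op x ∈ Set.range (X.σ 0) := by
  refine ⟨?_, fun ⟨y, hy⟩ => ?_⟩
  · rintro ⟨y, rfl⟩
    exact ⟨_, (map_principalEdge_σ i y).symm⟩
  · obtain ⟨z, -, hz⟩ := Types.exists_of_isPullback (hX 0 0 _ _ _
      (SimplexCategory.isFree_principalEdge _ i) (SimplexCategory.isPushout_σ_principalEdge n i))
      y x hy
    exact ⟨z, hz⟩

lemma map_mem_range_σ (f : Y ⟶ X) {n : ℕ} (i : Fin (n + 1)) {y : Y _⦋n + 1⦌}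
    (hy : y ∈ Set.range (Y.σ i)) : f.app _ y ∈ Set.range (X.σ i) := by
  obtain ⟨x, rfl⟩ := hy
  exact ⟨f.app _ x, (NatTrans.naturality_apply f (SimplexCategory.σ i).op x).symm⟩

lemma mem_wordSet_a_iff (x : X _⦋1⦌) :
    x ∈ wordSet X (fun _ : Fin 1 => Letter.a) ↔ x ∉ Set.range (X.σ 0) := by
  simp [wordSet, edgeSet, SimplexCategory.principalEdge_one]

lemma Conservative.preservesNondegenerateEdges {f : Y ⟶ X} (hf : Conservative f) :
    PreservesNondegenerateEdges f := by
  rintro e he ⟨x, hx⟩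
  obtain ⟨y, -, hy⟩ := Types.exists_of_isPullback (hf 0 0) x e hx
  exact he ⟨y, hy⟩

lemma PreservesNondegenerateEdges.map_mem_edgeSet {f : Y ⟶ X}
    (hf : PreservesNondegenerateEdges f) {e : Y _⦋1⦌} (l : Letter) (he : e ∈ edgeSet Y l) :
    f.app _ e ∈ edgeSet X l :=
  match l with
  | .z => map_mem_range_σ f 0 he
  | .o => trivial
  | .a => hf e he

lemma PreservesNondegenerateEdges.map_mem_wordSet {f : Y ⟶ X}
    (hf : PreservesNondegenerateEdges f) {n : ℕ} (w : Fin n → Letter) {y : Y _⦋n⦌}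
    (hy : y ∈ wordSet Y w) : f.app _ y ∈ wordSet X w := fun i => by
  rw [← NatTrans.naturality_apply]
  exact hf.map_mem_edgeSet (w i) (hy i)

lemma PreservesNondegenerateEdges.preservesWordSplitting {f : Y ⟶ X}
    (hf : PreservesNondegenerateEdges f) : PreservesWordSplitting f :=
  fun _ w _ _ hy => hf.map_mem_wordSet w hy

lemma PreservesWordSplitting.preservesNondegenerateEdges {f : Y ⟶ X}
    (hf : PreservesWordSplitting f) : PreservesNondegenerateEdges f := fun e he => by
  rw [← mem_wordSet_a_iff] at he ⊢
  exact hf 1 _ (fun _ => Letter.noConfusion) e he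

lemma PreservesNondegenerateEdges.conservative (hY : Stiff Y) (hYc : Complete Y)
    (hXc : Complete X) {f : Y ⟶ X} (hf : PreservesNondegenerateEdges f) : Conservative f := by
  intro n i
  rw [Types.isPullback_iff]
  refine ⟨(f.naturality (SimplexCategory.σ i).op).symm, fun y y' h => hYc n i h.2,
    fun x y hxy => ?_⟩
  have hedge : X.map (principalEdge (n + 1) i).op (f.app _ y) ∈ Set.range (X.σ 0) := by
    rw [← hxy]
    exact ⟨_, (map_principalEdge_σ i x).symm⟩
  rw [← NatTrans.naturality_apply] at hedge
  obtain ⟨y₀, rfl⟩ : y ∈ Set.range (Y.σ i) :=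
    (hY.mem_range_σ_iff i y).2 (not_not.1 fun h => hf _ h hedge)
  refine ⟨y₀, hXc n i ?_, rfl⟩
  rw [hxy]
  exact (NatTrans.naturality_apply f (SimplexCategory.σ i).op y₀).symm

theorem statement12_general (Y X : SSet) (hY : Stiff Y) (hYc : Complete Y)
    (hXc : Complete X) (f : Y ⟶ X) :
    (Conservative f ↔ ∀ (n : ℕ) (w : Fin n → Letter), (∀ i, w i ≠ Letter.o) →
      ∀ σ ∈ wordSet Y w, f.app (op (SimplexCategory.mk n)) σ ∈ wordSet X w) ∧
    ((∀ (n : ℕ) (w : Fin n → Letter), (∀ i, w i ≠ Letter.o) →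
      ∀ σ ∈ wordSet Y w, f.app (op (SimplexCategory.mk n)) σ ∈ wordSet X w) ↔
      ∀ σ : Y _⦋1⦌, σ ∉ Set.range (Y.σ (0 : Fin 1)) →
        f.app (op (SimplexCategory.mk 1)) σ ∉ Set.range (X.σ (0 : Fin 1))) := by
  change (Conservative f ↔ PreservesWordSplitting f) ∧
    (PreservesWordSplitting f ↔ PreservesNondegenerateEdges f)
  exact ⟨⟨fun h => h.preservesNondegenerateEdges.preservesWordSplitting,
      fun h => h.preservesNondegenerateEdges.conservative hY hYc hXc⟩,
    ⟨fun h => h.preservesNondegenerateEdges, fun h => h.preservesWordSplitting⟩⟩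

theorem statement12 (Y X : SSet) (hY : Stiff Y) (hYc : Complete Y)
    (hX : Stiff X) (hXc : Complete X) (f : Y ⟶ X) :
    (Conservative f ↔ ∀ (n : ℕ) (w : Fin n → Letter), (∀ i, w i ≠ Letter.o) →
      ∀ σ ∈ wordSet Y w, f.app (op (SimplexCategory.mk n)) σ ∈ wordSet X w) ∧
    ((∀ (n : ℕ) (w : Fin n → Letter), (∀ i, w i ≠ Letter.o) →
      ∀ σ ∈ wordSet Y w, f.app (op (SimplexCategory.mk n)) σ ∈ wordSet X w) ↔
      ∀ σ : Y _⦋1⦌, σ ∉ Set.range (Y.σ (0 : Fin 1)) →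
        f.app (op (SimplexCategory.mk 1)) σ ∉ Set.range (X.σ (0 : Fin 1))) :=
  statement12_general Y X hY hYc hXc f
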